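/- Block-wise rotation invariance with residual corrections: if in an RMSNorm transformer each block ℓ uses its own orthogonal matrix Q_ℓ (inputs premultiplied by Q_ℓᵀ, outputs postmultiplied by Q_{ℓ+1}) and the residual stream is multiplied by Q_ℓᵀQ_{ℓ+1} at each residual connection, then for all ℓ the transformed residual signal satisfies X̃_ℓ = X_ℓ Q_ℓ where X_ℓ is the original residual signal, and the final output is unchanged when the head is premultiplied by Q_{L+1}ᵀ. -/
import Mathlib


open Matrix

/-- The Euclidean norm of a vector. -/
noncomputable def vnorm {D : ℕ} (x : Fin D → ℝ) : ℝ :=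
  Real.sqrt (∑ i, x i ^ 2)

/-- RMSNorm: divide each row of a matrix by its Euclidean norm. -/
noncomputable def rmsNorm {N D : ℕ} (X : Matrix (Fin N) (Fin D) ℝ) :
    Matrix (Fin N) (Fin D) ℝ :=
  Matrix.of fun i j => X i j / vnorm (X i)

/-- The matrix `𝟙bᵀ` broadcasting a bias row vector `b` to `N` rows. -/
def biasRow (N : ℕ) {D : ℕ} (b : Fin D → ℝ) : Matrix (Fin N) (Fin D) ℝ :=
  Matrix.of fun _ j => b j

/-- Residual signals of the original RMSNorm transformer:
`X₀` normalized, then `X ↦ Norm(X + σ(XW_in + 𝟙b_inᵀ)W_out + 𝟙b_outᵀ)` for each block. -/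
noncomputable def states {L N D : ℕ} {Dh : Fin L → ℕ}
    (σ : ∀ ℓ : Fin L, Matrix (Fin N) (Fin (Dh ℓ)) ℝ → Matrix (Fin N) (Fin (Dh ℓ)) ℝ)
    (Win : ∀ ℓ : Fin L, Matrix (Fin D) (Fin (Dh ℓ)) ℝ)
    (bin : ∀ ℓ : Fin L, Fin (Dh ℓ) → ℝ)
    (Wout : ∀ ℓ : Fin L, Matrix (Fin (Dh ℓ)) (Fin D) ℝ)
    (bout : ∀ ℓ : Fin L, Fin D → ℝ)
    (X0 : Matrix (Fin N) (Fin D) ℝ) : ℕ → Matrix (Fin N) (Fin D) ℝ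
  | 0 => rmsNorm X0
  | k + 1 =>
    if h : k < L then
      rmsNorm (states σ Win bin Wout bout X0 k +
        (σ ⟨k, h⟩ (states σ Win bin Wout bout X0 k * Win ⟨k, h⟩ +
            biasRow N (bin ⟨k, h⟩)) * Wout ⟨k, h⟩ + biasRow N (bout ⟨k, h⟩)))
    else states σ Win bin Wout bout X0 k

/-- Residual signals of the transformed network: block `ℓ` uses
`W̃_in^ℓ = Q_ℓᵀW_in^ℓ`, `W̃_out^ℓ = W_out^ℓ Q_{ℓ+1}`, `b̃_out^ℓ = Q_{ℓ+1}ᵀb_out^ℓ`, and the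
residual branch is multiplied by the extra linear map `Q_ℓᵀQ_{ℓ+1}`. The embedded signal is
rotated by `Q_0`. -/
noncomputable def tstates {L N D : ℕ} {Dh : Fin L → ℕ}
    (σ : ∀ ℓ : Fin L, Matrix (Fin N) (Fin (Dh ℓ)) ℝ → Matrix (Fin N) (Fin (Dh ℓ)) ℝ)
    (Win : ∀ ℓ : Fin L, Matrix (Fin D) (Fin (Dh ℓ)) ℝ)
    (bin : ∀ ℓ : Fin L, Fin (Dh ℓ) → ℝ)
    (Wout : ∀ ℓ : Fin L, Matrix (Fin (Dh ℓ)) (Fin D) ℝ)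
    (bout : ∀ ℓ : Fin L, Fin D → ℝ)
    (Q : ℕ → Matrix (Fin D) (Fin D) ℝ)
    (X0 : Matrix (Fin N) (Fin D) ℝ) : ℕ → Matrix (Fin N) (Fin D) ℝ
  | 0 => rmsNorm (X0 * Q 0)
  | k + 1 =>
    if h : k < L then
      rmsNorm (tstates σ Win bin Wout bout Q X0 k * ((Q k)ᵀ * Q (k + 1)) +
        (σ ⟨k, h⟩ (tstates σ Win bin Wout bout Q X0 k * ((Q k)ᵀ * Win ⟨k, h⟩) +
            biasRow N (bin ⟨k, h⟩)) * (Wout ⟨k, h⟩ * Q (k + 1)) +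
          biasRow N ((Q (k + 1))ᵀ.mulVec (bout ⟨k, h⟩))))
    else tstates σ Win bin Wout bout Q X0 k

lemma vnorm_vecMul {D : ℕ} (x : Fin D → ℝ) (Q : Matrix (Fin D) (Fin D) ℝ)
    (hQ : Q * Qᵀ = 1) : vnorm (Matrix.vecMul x Q) = vnorm x := by
  unfold vnorm
  congr 1
  have h1 : ∑ i, Matrix.vecMul x Q i ^ 2 = Matrix.vecMul x Q ⬝ᵥ Matrix.vecMul x Q := by
    simp [dotProduct, sq]
  have h2 : ∑ i, x i ^ 2 = x ⬝ᵥ x := by simp [dotProduct, sq]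
  rw [h1, h2, ← Matrix.dotProduct_mulVec, ← Matrix.mulVec_transpose,
    Matrix.mulVec_mulVec, hQ, Matrix.one_mulVec]

lemma rmsNorm_mul {N D : ℕ} (X : Matrix (Fin N) (Fin D) ℝ) (Q : Matrix (Fin D) (Fin D) ℝ)
    (hQ : Q * Qᵀ = 1) : rmsNorm (X * Q) = rmsNorm X * Q := by
  ext i j
  have hrow : (X * Q) i = Matrix.vecMul (X i) Q := by
    ext j; simp [Matrix.mul_apply, Matrix.vecMul, dotProduct]
  simp only [rmsNorm, Matrix.of_apply, Matrix.mul_apply, hrow,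
    vnorm_vecMul _ _ hQ, Matrix.vecMul, dotProduct]
  rw [Finset.sum_div]
  congr 1; ext k; ring

lemma biasRow_mulVec {N D : ℕ} (b : Fin D → ℝ) (Q : Matrix (Fin D) (Fin D) ℝ) :
    biasRow N (Qᵀ.mulVec b) = biasRow N b * Q := by
  ext i j
  simp [biasRow, Matrix.mulVec, Matrix.mul_apply, dotProduct, mul_comm]

/-- **Block-wise rotation invariance with residual corrections.** If each block `ℓ` uses its
own orthogonal matrix `Q_ℓ` and the residual stream is multiplied by `Q_ℓᵀQ_{ℓ+1}` at each
residual connection, then the transformed residual signal satisfies `X̃_ℓ = X_ℓ Q_ℓ` for all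
`ℓ`, and the final output is unchanged when the head is premultiplied by the transpose of
the last rotation. -/
theorem blockwise_rotation_invariance {L N D V Vo : ℕ} {Dh : Fin L → ℕ}
    (σ : ∀ ℓ : Fin L, Matrix (Fin N) (Fin (Dh ℓ)) ℝ → Matrix (Fin N) (Fin (Dh ℓ)) ℝ)
    (Win : ∀ ℓ : Fin L, Matrix (Fin D) (Fin (Dh ℓ)) ℝ)
    (bin : ∀ ℓ : Fin L, Fin (Dh ℓ) → ℝ)
    (Wout : ∀ ℓ : Fin L, Matrix (Fin (Dh ℓ)) (Fin D) ℝ)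
    (bout : ∀ ℓ : Fin L, Fin D → ℝ)
    (X0 : Matrix (Fin N) (Fin D) ℝ)
    (Whead : Matrix (Fin D) (Fin Vo) ℝ) (bhead : Fin Vo → ℝ)
    (Q : ℕ → Matrix (Fin D) (Fin D) ℝ)
    (hQ1 : ∀ k, (Q k)ᵀ * Q k = 1) (hQ2 : ∀ k, Q k * (Q k)ᵀ = 1)
    -- every row being normalized in the original forward pass is nonzero
    (hemb : ∀ i, X0 i ≠ 0)
    (hrows : ∀ (k : ℕ) (h : k < L) (i : Fin N),
      (states σ Win bin Wout bout X0 k +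
        (σ ⟨k, h⟩ (states σ Win bin Wout bout X0 k * Win ⟨k, h⟩ +
            biasRow N (bin ⟨k, h⟩)) * Wout ⟨k, h⟩ + biasRow N (bout ⟨k, h⟩))) i ≠ 0) :
    (∀ k ≤ L, tstates σ Win bin Wout bout Q X0 k = states σ Win bin Wout bout X0 k * Q k) ∧
      tstates σ Win bin Wout bout Q X0 L * ((Q L)ᵀ * Whead) + biasRow N bhead =
        states σ Win bin Wout bout X0 L * Whead + biasRow N bhead := by
  have key : ∀ k ≤ L, tstates σ Win bin Wout bout Q X0 k =
      states σ Win bin Wout bout X0 k * Q k := by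
    intro k
    induction k with
    | zero =>
      intro _
      show rmsNorm (X0 * Q 0) = rmsNorm X0 * Q 0
      exact rmsNorm_mul _ _ (hQ2 0)
    | succ k ih =>
      intro hk
      have hkL : k < L := hk
      have IH := ih (le_of_lt hkL)
      show (if h : k < L then _ else _) = _
      rw [dif_pos hkL]
      simp only [states, dif_pos hkL]
      rw [IH]
      have e1 : states σ Win bin Wout bout X0 k * Q k * ((Q k)ᵀ * Q (k + 1)) =
          states σ Win bin Wout bout X0 k * Q (k + 1) := by
        rw [← Matrix.mul_assoc, Matrix.mul_assoc _ (Q k) (Q k)ᵀ, hQ2 k, Matrix.mul_one]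
      have e2 : states σ Win bin Wout bout X0 k * Q k * ((Q k)ᵀ * Win ⟨k, hkL⟩) =
          states σ Win bin Wout bout X0 k * Win ⟨k, hkL⟩ := by
        rw [← Matrix.mul_assoc, Matrix.mul_assoc _ (Q k) (Q k)ᵀ, hQ2 k, Matrix.mul_one]
      rw [e1, e2, biasRow_mulVec, ← Matrix.mul_assoc, ← rmsNorm_mul _ _ (hQ2 (k + 1))]
      congr 1
      rw [Matrix.add_mul, Matrix.add_mul]
  refine ⟨key, ?_⟩
  rw [key L le_rfl, ← Matrix.mul_assoc, Matrix.mul_assoc _ (Q L) (Q L)ᵀ, hQ2 L,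
    Matrix.mul_one]
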